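/- Fix k ∈ ℕ with k ≥ 1, α > 0 with α ≠ 1/k, and ρ ∈ (−1,1), and set ν = 1/k. For parameters s > 0, c ∈ [0,1), ω ≥ 0, ζ ≥ 0, η ≥ 0, set a = s(1−c) + ω², S₀ = 2α/(a(α + ν + |α − ν|)), γ₀ = a²νS₀²/α, I⁰ = s(1−c)(1 − 2s(1−c)νS₀ + a s(1−c) ν S₀²), I¹ = (s(1−c)(1−ν) + ω²)/ν, and define the ridgeless homogeneous-ensemble error E_k(s, c, η, ω, ζ) = (1/k)·((1−ρ²)I⁰ + ρ²I¹ + γ₀ζ² + η²)/(1 − γ₀) + ((k−1)/k)·((1−ρ²)s(1−c)(1 − 2s(1−c)νS₀) − ρ²s(1−c)). If two parameter tuples (s, c, η, ω, ζ) and (s', c', η', ω', ζ') satisfy η²/(s(1−c)) = η'²/(s'(1−c')), ω²/(s(1−c)) = ω'²/(s'(1−c')), and ζ²/(s(1−c)) = ζ'²/(s'(1−c')), then E_k(s, c, η, ω, ζ)/(s(1−c)) = E_k(s', c', η', ω', ζ')/(s'(1−c')). In particular E_k = s(1−c)·ℰ(k, ρ, α, H, W, Z) for a function ℰ of the reduced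 noise-to-signal ratios H = η²/(s(1−c)), W = ω²/(s(1−c)), Z = ζ²/(s(1−c)) alone. -/

import Mathlib

/-- Ridgeless generalization error of a homogeneous ensemble of `k` linear regressors on
equicorrelated data, each subsampling a mutually exclusive fraction `ν = 1/k` of the
features (total number of weights conserved). -/
noncomputable def homEnsErr (k : ℕ) (α ρ s c ω ζ η : ℝ) : ℝ :=
  let ν : ℝ := 1 / (k : ℝ)
  let a : ℝ := s * (1 - c) + ω ^ 2
  let S0 : ℝ := 2 * α / (a * (α + ν + |α - ν|))
  let γ0 : ℝ := a ^ 2 * ν * S0 ^ 2 / α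
  let I0 : ℝ := s * (1 - c) * (1 - 2 * s * (1 - c) * ν * S0 + a * s * (1 - c) * ν * S0 ^ 2)
  let I1 : ℝ := (s * (1 - c) * (1 - ν) + ω ^ 2) / ν
  (1 / (k : ℝ)) * (((1 - ρ ^ 2) * I0 + ρ ^ 2 * I1 + γ0 * ζ ^ 2 + η ^ 2) / (1 - γ0)) +
    (((k : ℝ) - 1) / (k : ℝ)) *
      ((1 - ρ ^ 2) * s * (1 - c) * (1 - 2 * s * (1 - c) * ν * S0) - ρ ^ 2 * s * (1 - c))

/-! The error depends on `s, c` only through `b = s(1−c)`, and it is homogeneous of degree one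
in `(b, ω², ζ², η²)`: `a = b(1 + ω²/b)`, `S₀` scales like `1/b`, so `γ₀` is scale-free and
`I⁰`, `I¹` and the cross term are `b` times functions of the ratios. -/

-- The paper's `ℰ`: `homEnsErr` with `s(1−c) = 1` and `ω², ζ², η²` replaced by `W, Z, H`.
noncomputable def reducedHomEnsErr (k : ℕ) (α ρ W Z H : ℝ) : ℝ :=
  let ν : ℝ := 1 / (k : ℝ)
  let a : ℝ := 1 + W
  let S0 : ℝ := 2 * α / (a * (α + ν + |α - ν|))
  let γ0 : ℝ := a ^ 2 * ν * S0 ^ 2 / α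
  let I0 : ℝ := 1 - 2 * ν * S0 + a * ν * S0 ^ 2
  let I1 : ℝ := (1 - ν + W) / ν
  (1 / (k : ℝ)) * (((1 - ρ ^ 2) * I0 + ρ ^ 2 * I1 + γ0 * Z + H) / (1 - γ0)) +
    (((k : ℝ) - 1) / (k : ℝ)) * ((1 - ρ ^ 2) * (1 - 2 * ν * S0) - ρ ^ 2)

theorem homEnsErr_eq_mul_reducedHomEnsErr (k : ℕ) (α ρ s c ω ζ η : ℝ) (hb : s * (1 - c) ≠ 0) :
    homEnsErr k α ρ s c ω ζ η = s * (1 - c) *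
      reducedHomEnsErr k α ρ (ω ^ 2 / (s * (1 - c))) (ζ ^ 2 / (s * (1 - c)))
        (η ^ 2 / (s * (1 - c))) := by
  dsimp only [homEnsErr, reducedHomEnsErr]
  set b := s * (1 - c)
  set ν : ℝ := 1 / k
  set d := α + ν + |α - ν|
  set u := 2 * α / ((1 + ω ^ 2 / b) * d)
  have hS : 2 * α / ((b + ω ^ 2) * d) = u / b := by rw [div_div]; congr 1; field_simp
  have hγ : (b + ω ^ 2) ^ 2 * ν * (u / b) ^ 2 / α = (1 + ω ^ 2 / b) ^ 2 * ν * u ^ 2 / α := by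
    field_simp
  rw [hS, hγ]
  field_simp
  ring

theorem stmt_17_general (k : ℕ) (α ρ : ℝ)
    (s c ω ζ η s' c' ω' ζ' η' : ℝ)
    (hs : 0 < s) (hc : c ∈ Set.Ico (0 : ℝ) 1)
    (hs' : 0 < s') (hc' : c' ∈ Set.Ico (0 : ℝ) 1)
    (hH : η ^ 2 / (s * (1 - c)) = η' ^ 2 / (s' * (1 - c')))
    (hW : ω ^ 2 / (s * (1 - c)) = ω' ^ 2 / (s' * (1 - c')))
    (hZ : ζ ^ 2 / (s * (1 - c)) = ζ' ^ 2 / (s' * (1 - c'))) :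
    homEnsErr k α ρ s c ω ζ η / (s * (1 - c)) =
      homEnsErr k α ρ s' c' ω' ζ' η' / (s' * (1 - c')) := by
  have hb : s * (1 - c) ≠ 0 := (mul_pos hs (sub_pos.2 hc.2)).ne'
  have hb' : s' * (1 - c') ≠ 0 := (mul_pos hs' (sub_pos.2 hc'.2)).ne'
  rw [homEnsErr_eq_mul_reducedHomEnsErr k α ρ s c ω ζ η hb,
    homEnsErr_eq_mul_reducedHomEnsErr k α ρ s' c' ω' ζ' η' hb',
    mul_div_cancel_left₀ _ hb, mul_div_cancel_left₀ _ hb', hH, hW, hZ]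

/-- Scale invariance of the ridgeless homogeneous-ensemble error: if two parameter tuples
have the same reduced noise-to-signal ratios `H = η²/(s(1−c))`, `W = ω²/(s(1−c))`,
`Z = ζ²/(s(1−c))`, then the reduced errors `E_k/(s(1−c))` coincide; hence
`E_k = s(1−c)·ℰ(k, ρ, α, H, W, Z)`. -/
theorem stmt_17 (k : ℕ) (hk : 1 ≤ k) (α ρ : ℝ) (hα : 0 < α) (hαν : α ≠ 1 / (k : ℝ))
    (hρ : ρ ∈ Set.Ioo (-1 : ℝ) 1)
    (s c ω ζ η s' c' ω' ζ' η' : ℝ)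
    (hs : 0 < s) (hc : c ∈ Set.Ico (0 : ℝ) 1) (hω : 0 ≤ ω) (hζ : 0 ≤ ζ) (hη : 0 ≤ η)
    (hs' : 0 < s') (hc' : c' ∈ Set.Ico (0 : ℝ) 1) (hω' : 0 ≤ ω') (hζ' : 0 ≤ ζ')
    (hη' : 0 ≤ η')
    (hH : η ^ 2 / (s * (1 - c)) = η' ^ 2 / (s' * (1 - c')))
    (hW : ω ^ 2 / (s * (1 - c)) = ω' ^ 2 / (s' * (1 - c')))
    (hZ : ζ ^ 2 / (s * (1 - c)) = ζ' ^ 2 / (s' * (1 - c'))) :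
    homEnsErr k α ρ s c ω ζ η / (s * (1 - c)) =
      homEnsErr k α ρ s' c' ω' ζ' η' / (s' * (1 - c')) :=
  stmt_17_general k α ρ s c ω ζ η s' c' ω' ζ' η' hs hc hs' hc' hH hW hZ
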